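/- Let σ be the logistic sigmoid and z, z' ∈ ℝ with |z - z'| ≤ ε. Then for any p ∈ [0,1], the quantity -p·ln(σ(z')/σ(z)) - (1-p)·ln((1-σ(z'))/(1-σ(z))) is at most ε. -/

import Mathlib

/-! Write `σ` for the sigmoid. From `σ(x) = eˣ σ(-x)` we get `log σ(x) - log σ(-x) = x`, so
`x - log σ(x) = -log σ(-x)` is monotone, as is `log σ`; a function `f` with `f` and `id - f`
monotone is 1-Lipschitz. As `1 - σ(z) = σ(-z)`, both logarithms in the distillation term move by
at most `|z - z'|`, and so does any convex combination of them. -/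

noncomputable def sigmoid (z : ℝ) : ℝ := 1 / (1 + Real.exp (-z))

theorem lipschitzWith_one_of_monotone_of_monotone_sub {f : ℝ → ℝ} (hf : Monotone f)
    (hg : Monotone fun x => x - f x) : LipschitzWith 1 f := by
  refine LipschitzWith.of_le_add fun x y => ?_
  rw [Real.dist_eq]
  rcases le_total x y with hxy | hyx
  · linarith [hf hxy, abs_nonneg (x - y)]
  · linarith [hg hyx, le_abs_self (x - y)]

theorem sigmoid_eq_real_sigmoid : sigmoid = Real.sigmoid := by
  funext x
  rw [sigmoid, Real.sigmoid_def, one_div]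

theorem log_sigmoid_neg (x : ℝ) :
    Real.log (Real.sigmoid (-x)) = Real.log (Real.sigmoid x) - x := by
  rw [← Real.sigmoid_mul_rexp_neg,
    Real.log_mul (Real.sigmoid_pos x).ne' (Real.exp_pos _).ne', Real.log_exp, sub_eq_add_neg]

theorem monotone_log_sigmoid : Monotone fun x => Real.log (Real.sigmoid x) :=
  fun _ _ hab => Real.log_le_log (Real.sigmoid_pos _) (Real.sigmoid_le hab)

theorem lipschitzWith_log_sigmoid : LipschitzWith 1 fun x => Real.log (Real.sigmoid x) := by
  refine lipschitzWith_one_of_monotone_of_monotone_sub monotone_log_sigmoid ?_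
  have h : (fun x => x - Real.log (Real.sigmoid x)) = fun x => -Real.log (Real.sigmoid (-x)) := by
    funext x
    rw [log_sigmoid_neg]
    ring
  rw [h]
  exact fun a b hab => neg_le_neg (monotone_log_sigmoid (neg_le_neg hab))

theorem abs_log_sigmoid_sub_le (a b : ℝ) :
    |Real.log (Real.sigmoid a) - Real.log (Real.sigmoid b)| ≤ |a - b| := by
  simpa only [Real.dist_eq, NNReal.coe_one, one_mul] using
    lipschitzWith_log_sigmoid.dist_le_mul a b

theorem per_sample_distillation_bound (z z' ε : ℝ) (hz : |z - z'| ≤ ε)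
    (p : ℝ) (hp : p ∈ Set.Icc (0:ℝ) 1) :
    -p * Real.log (sigmoid z' / sigmoid z)
      - (1 - p) * Real.log ((1 - sigmoid z') / (1 - sigmoid z)) ≤ ε := by
  obtain ⟨hp0, hp1⟩ := hp
  simp only [sigmoid_eq_real_sigmoid, ← Real.sigmoid_neg]
  rw [Real.log_div (Real.sigmoid_pos _).ne' (Real.sigmoid_pos _).ne',
    Real.log_div (Real.sigmoid_pos _).ne' (Real.sigmoid_pos _).ne']
  have hlog_sigmoid : -(Real.log (Real.sigmoid z') - Real.log (Real.sigmoid z)) ≤ ε :=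
    (neg_le_abs _).trans ((abs_log_sigmoid_sub_le z' z).trans (abs_sub_comm z' z ▸ hz))
  have hlog_sigmoid_neg : -(Real.log (Real.sigmoid (-z')) - Real.log (Real.sigmoid (-z))) ≤ ε :=
    (neg_le_abs _).trans ((abs_log_sigmoid_sub_le _ _).trans (by rw [neg_sub_neg]; exact hz))
  linarith [mul_le_mul_of_nonneg_left hlog_sigmoid hp0,
    mul_le_mul_of_nonneg_left hlog_sigmoid_neg (sub_nonneg.2 hp1)]
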